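/- arXiv:1105.5310 — 5 statements merged into one kernel-verified Lean document; each statement's English description precedes it below -/
import Mathlib

section
/- Let E be a finite set, Q a real E×E matrix with nonnegative off-diagonal entries, and set η_i = -∑_j Q_{ij} ≥ 0. Let α₀ = min_{i∈E} η_i and α₁ = max_{i∈E} η_i. Then for every i ∈ E and every t ≥ 0, e^{-α₁ t} ≤ ∑_j (exp(tQ))_{ij} ≤ e^{-α₀ t}. -/
/-!
Adding `c • 1` to a matrix `Q` with nonnegative off-diagonal entries makes it entrywise
nonnegative once `c` is large, and `exp Q = e^{-c} • exp (Q + c • 1)`. A nonnegative matrix `B`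
acts monotonically on vectors, so row-sum bounds `a • 1 ≤ B *ᵥ 1 ≤ b • 1` (with `0 ≤ a, b`)
propagate to `a ^ k • 1 ≤ B ^ k *ᵥ 1 ≤ b ^ k • 1`, and summing the exponential series gives
`e^a • 1 ≤ exp B *ᵥ 1 ≤ e^b • 1`. For `t • Q` the row sums are `-t η_i ∈ [-t α₁, -t α₀]`.
-/

open NormedSpace
open scoped Nat

theorem Real.hasSum_pow_smul_exp {V : Type*} [AddCommGroup V] [Module ℝ V] [TopologicalSpace V]
    [ContinuousSMul ℝ V] (b : ℝ) (v : V) :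
    HasSum (fun k => (k !⁻¹ : ℝ) • (b ^ k • v)) (Real.exp b • v) := by
  rw [Real.exp_eq_exp_ℝ]
  simpa only [smul_smul, smul_eq_mul] using (exp_series_hasSum_exp' (𝕂 := ℝ) b).smul_const v

namespace Matrix

variable {n : Type*} [Fintype n]

theorem mulVec_mono_of_nonneg {B : Matrix n n ℝ} (hB : ∀ i j, 0 ≤ B i j) {v w : n → ℝ}
    (hvw : v ≤ w) : B *ᵥ v ≤ B *ᵥ w := fun i =>
  Finset.sum_le_sum fun j _ => mul_le_mul_of_nonneg_left (hvw j) (hB i j)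

theorem mulVec_one_apply (A : Matrix n n ℝ) (i : n) : (A *ᵥ 1) i = ∑ j, A i j := by
  simp [mulVec, dotProduct]

variable [DecidableEq n]

theorem pow_mulVec_one_le {B : Matrix n n ℝ} (hB : ∀ i j, 0 ≤ B i j) {b : ℝ} (hb : 0 ≤ b)
    (h : B *ᵥ 1 ≤ b • 1) (k : ℕ) : B ^ k *ᵥ 1 ≤ b ^ k • 1 := by
  induction k with
  | zero => simp
  | succ k ih =>
    calc B ^ (k + 1) *ᵥ 1 = B *ᵥ (B ^ k *ᵥ 1) := by rw [pow_succ', mulVec_mulVec]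
      _ ≤ B *ᵥ (b ^ k • 1) := mulVec_mono_of_nonneg hB ih
      _ = b ^ k • (B *ᵥ 1) := mulVec_smul _ _ _
      _ ≤ b ^ k • (b • 1) := smul_le_smul_of_nonneg_left h (pow_nonneg hb k)
      _ = b ^ (k + 1) • 1 := by rw [smul_smul, pow_succ]

theorem le_pow_mulVec_one {B : Matrix n n ℝ} (hB : ∀ i j, 0 ≤ B i j) {a : ℝ} (ha : 0 ≤ a)
    (h : a • 1 ≤ B *ᵥ 1) (k : ℕ) : a ^ k • 1 ≤ B ^ k *ᵥ 1 := by
  induction k with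
  | zero => simp
  | succ k ih =>
    calc a ^ (k + 1) • 1 = a ^ k • (a • 1) := by rw [smul_smul, pow_succ]
      _ ≤ a ^ k • (B *ᵥ 1) := smul_le_smul_of_nonneg_left h (pow_nonneg ha k)
      _ = B *ᵥ (a ^ k • 1) := (mulVec_smul _ _ _).symm
      _ ≤ B *ᵥ (B ^ k *ᵥ 1) := mulVec_mono_of_nonneg hB ih
      _ = B ^ (k + 1) *ᵥ 1 := by rw [pow_succ', mulVec_mulVec]

theorem hasSum_pow_mulVec_exp (B : Matrix n n ℝ) (v : n → ℝ) :
    HasSum (fun k => (k !⁻¹ : ℝ) • (B ^ k *ᵥ v)) (exp B *ᵥ v) := by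
  open scoped Norms.Operator in
  have := (exp_series_hasSum_exp' (𝕂 := ℝ) B).map (mulVec.addMonoidHomLeft v)
    (continuous_id.matrix_mulVec continuous_const)
  convert this using 1
  · funext k
    exact (smul_mulVec (k !⁻¹ : ℝ) (B ^ k) v).symm
  · rfl

theorem exp_mulVec_one_le {B : Matrix n n ℝ} (hB : ∀ i j, 0 ≤ B i j) {b : ℝ} (hb : 0 ≤ b)
    (h : B *ᵥ 1 ≤ b • 1) : exp B *ᵥ 1 ≤ Real.exp b • 1 :=
  hasSum_le (fun k => smul_le_smul_of_nonneg_left (pow_mulVec_one_le hB hb h k) (by positivity))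
    (hasSum_pow_mulVec_exp B 1) (Real.hasSum_pow_smul_exp b 1)

theorem le_exp_mulVec_one {B : Matrix n n ℝ} (hB : ∀ i j, 0 ≤ B i j) {a : ℝ} (ha : 0 ≤ a)
    (h : a • 1 ≤ B *ᵥ 1) : Real.exp a • 1 ≤ exp B *ᵥ 1 :=
  hasSum_le (fun k => smul_le_smul_of_nonneg_left (le_pow_mulVec_one hB ha h k) (by positivity))
    (Real.hasSum_pow_smul_exp a 1) (hasSum_pow_mulVec_exp B 1)

theorem exp_add_smul_one (A : Matrix n n ℝ) (s : ℝ) :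
    exp (A + s • 1) = Real.exp s • exp A := by
  rw [exp_add_of_commute _ _ ((Commute.one_right A).smul_right s), smul_one_eq_diagonal,
    exp_diagonal, Pi.exp_def, ← Real.exp_eq_exp_ℝ, ← smul_one_eq_diagonal, mul_smul_one]

theorem exp_eq_real_exp_neg_smul_exp_add_smul_one (A : Matrix n n ℝ) (c : ℝ) :
    exp A = Real.exp (-c) • exp (A + c • 1) := by
  rw [← exp_add_smul_one, add_assoc, ← add_smul, add_neg_cancel, zero_smul, add_zero]

theorem exists_add_smul_one_nonneg {Q : Matrix n n ℝ} (hQ : ∀ i j, i ≠ j → 0 ≤ Q i j) (r : ℝ) :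
    ∃ c, r ≤ c ∧ ∀ i j, 0 ≤ (Q + c • 1) i j := by
  obtain ⟨c, hc⟩ := Finite.exists_le fun i => -Q i i
  refine ⟨max r c, le_max_left r c, fun i j => ?_⟩
  rcases eq_or_ne i j with rfl | hij
  · have := (hc i).trans (le_max_right r c)
    simp only [add_apply, smul_apply, one_apply_eq, smul_eq_mul, mul_one]
    linarith
  · simpa [one_apply_ne hij] using hQ i j hij

theorem exp_mulVec_one_le_of_offDiag_nonneg {Q : Matrix n n ℝ}
    (hQ : ∀ i j, i ≠ j → 0 ≤ Q i j) {b : ℝ} (h : Q *ᵥ 1 ≤ b • 1) :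
    exp Q *ᵥ 1 ≤ Real.exp b • 1 := by
  obtain ⟨c, hbc, hA⟩ := exists_add_smul_one_nonneg hQ (-b)
  have hArow : (Q + c • 1) *ᵥ 1 ≤ (b + c) • 1 := by
    rw [add_mulVec, smul_mulVec, one_mulVec, add_smul]
    exact add_le_add_left h _
  calc exp Q *ᵥ 1 = Real.exp (-c) • (exp (Q + c • 1) *ᵥ 1) := by rw [exp_eq_real_exp_neg_smul_exp_add_smul_one Q c, smul_mulVec]
    _ ≤ Real.exp (-c) • (Real.exp (b + c) • 1) := smul_le_smul_of_nonneg_left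
        (exp_mulVec_one_le hA (by linarith) hArow) (Real.exp_pos _).le
    _ = Real.exp b • 1 := by rw [smul_smul, ← Real.exp_add, add_comm b c, neg_add_cancel_left]

theorem le_exp_mulVec_one_of_offDiag_nonneg {Q : Matrix n n ℝ}
    (hQ : ∀ i j, i ≠ j → 0 ≤ Q i j) {a : ℝ} (h : a • 1 ≤ Q *ᵥ 1) :
    Real.exp a • 1 ≤ exp Q *ᵥ 1 := by
  obtain ⟨c, hac, hA⟩ := exists_add_smul_one_nonneg hQ (-a)
  have hArow : (a + c) • 1 ≤ (Q + c • 1) *ᵥ 1 := by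
    rw [add_mulVec, smul_mulVec, one_mulVec, add_smul]
    exact add_le_add_left h _
  calc Real.exp a • 1 = Real.exp (-c) • (Real.exp (a + c) • 1) := by
        rw [smul_smul, ← Real.exp_add, add_comm a c, neg_add_cancel_left]
    _ ≤ Real.exp (-c) • (exp (Q + c • 1) *ᵥ 1) := smul_le_smul_of_nonneg_left
        (le_exp_mulVec_one hA (by linarith) hArow) (Real.exp_pos _).le
    _ = exp Q *ᵥ 1 := by rw [exp_eq_real_exp_neg_smul_exp_add_smul_one Q c, smul_mulVec]

end Matrix

open Matrix

theorem stmt_3_general (E : Type) [Fintype E] [DecidableEq E] [Nonempty E]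
    (Q : Matrix E E ℝ) (η : E → ℝ)
    (hQoff : ∀ i j, i ≠ j → 0 ≤ Q i j)
    (hη : ∀ i, η i = -∑ j, Q i j)
    (α₀ α₁ : ℝ)
    (hα₀ : α₀ = Finset.univ.inf' Finset.univ_nonempty η)
    (hα₁ : α₁ = Finset.univ.sup' Finset.univ_nonempty η) :
    ∀ (i : E) (t : ℝ), 0 ≤ t →
      Real.exp (-α₁ * t) ≤ ∑ j, NormedSpace.exp (t • Q) i j ∧
      ∑ j, NormedSpace.exp (t • Q) i j ≤ Real.exp (-α₀ * t) := by
  intro i t ht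
  have htQ : ∀ k j, k ≠ j → 0 ≤ (t • Q) k j := fun k j hkj => mul_nonneg ht (hQoff k j hkj)
  have hrow : ∀ k, ((t • Q) *ᵥ 1) k = -η k * t := fun k => by
    rw [smul_mulVec, Pi.smul_apply, mulVec_one_apply, hη, smul_eq_mul]; ring
  have hα₀η : ∀ k, α₀ ≤ η k := fun k => hα₀ ▸ Finset.inf'_le η (Finset.mem_univ k)
  have hηα₁ : ∀ k, η k ≤ α₁ := fun k => hα₁ ▸ Finset.le_sup' η (Finset.mem_univ k)
  have hlow := le_exp_mulVec_one_of_offDiag_nonneg htQ (a := -α₁ * t) fun k => by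
    simpa [hrow] using mul_le_mul_of_nonneg_right (hηα₁ k) ht
  have hup := exp_mulVec_one_le_of_offDiag_nonneg htQ (b := -α₀ * t) fun k => by
    simpa [hrow] using mul_le_mul_of_nonneg_right (hα₀η k) ht
  rw [← mulVec_one_apply]
  exact ⟨by simpa using hlow i, by simpa using hup i⟩

theorem stmt_3 (E : Type) [Fintype E] [DecidableEq E] [Nonempty E]
    (Q : Matrix E E ℝ) (η : E → ℝ)
    (hQoff : ∀ i j, i ≠ j → 0 ≤ Q i j)
    (hη : ∀ i, η i = -∑ j, Q i j)
    (hηpos : ∀ i, 0 ≤ η i)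
    (α₀ α₁ : ℝ)
    (hα₀ : α₀ = Finset.univ.inf' Finset.univ_nonempty η)
    (hα₁ : α₁ = Finset.univ.sup' Finset.univ_nonempty η) :
    ∀ (i : E) (t : ℝ), 0 ≤ t →
      Real.exp (-α₁ * t) ≤ ∑ j, NormedSpace.exp (t • Q) i j ∧
      ∑ j, NormedSpace.exp (t • Q) i j ≤ Real.exp (-α₀ * t) :=
  stmt_3_general E Q η hQoff hη α₀ α₁ hα₀ hα₁
end

section
/- Let E be a finite set, Q a real E×E matrix, α > 0, and μ a probability vector on E such that ∑_j (μ·exp(tQ))_j = e^{-αt} for all t ≥ 0. Define ν = (-1/α)·μQ. If ν has nonnegative entries and ∑_j ν_j = 1 (i.e. ν is a probability vector), then ∑_j (ν·exp(tQ))_j = e^{-αt} for all t ≥ 0. -/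
/-!
`t ↦ P_μ(T > t) = μ exp(tQ) 𝟙` has derivative `μ Q exp(tQ) 𝟙 = -α · ν exp(tQ) 𝟙`, while it equals
`e^{-αt}` on `[0, ∞)`, whose derivative is `-α e^{-αt}`.
-/

open Matrix NormedSpace Set

/-- One-sided derivatives on `[0, ∞)` are unique, which also covers the endpoint `t = 0`. -/
theorem ContinuousLinearMap.apply_mul_exp_smul_of_apply_exp_smul {𝔸 : Type*} [NormedRing 𝔸]
    [NormedAlgebra ℝ 𝔸] [CompleteSpace 𝔸] (L : 𝔸 →L[ℝ] ℝ) (x : 𝔸) (c : ℝ)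
    (h : ∀ t : ℝ, 0 ≤ t → L (exp (t • x)) = Real.exp (c * t)) {t : ℝ} (ht : 0 ≤ t) :
    L (x * exp (t • x)) = c * Real.exp (c * t) := by
  have hL : HasDerivWithinAt (fun s : ℝ => L (exp (s • x))) (L (x * exp (t • x))) (Ici 0) t :=
    (L.hasFDerivAt.comp_hasDerivAt t (hasDerivAt_exp_smul_const' x t)).hasDerivWithinAt
  have hexp : HasDerivWithinAt (fun s : ℝ => L (exp (s • x))) (c * Real.exp (c * t)) (Ici 0) t := by
    have := ((hasDerivAt_id t).const_mul c).exp.hasDerivWithinAt (s := Ici 0)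
    simp only [id, mul_one] at this
    rw [mul_comm]
    exact this.congr (fun s hs => h s hs) (h t ht)
  exact (uniqueDiffOn_Ici 0 t ht).eq_deriv _ hL hexp

/-- `M ↦ ∑ j, (μ ᵥ* M) j`; on `M = exp (t • Q)` this is the survival probability `P_μ(T > t)`. -/
noncomputable def Matrix.sumVecMulCLM {E : Type*} [Fintype E] (μ : E → ℝ) :
    Matrix E E ℝ →L[ℝ] ℝ :=
  LinearMap.toContinuousLinearMap
    ((∑ j, LinearMap.proj (R := ℝ) (φ := fun _ : E => ℝ) j) ∘ₗ vecMulBilin ℝ ℝ μ)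

@[simp]
theorem Matrix.sumVecMulCLM_apply {E : Type*} [Fintype E] (μ : E → ℝ) (M : Matrix E E ℝ) :
    sumVecMulCLM μ M = ∑ j, (μ ᵥ* M) j := by
  simp [sumVecMulCLM]

-- Any matrix norm would do: it only serves to differentiate `exp`, and induces the usual topology.
attribute [local instance] Matrix.linftyOpNormedRing Matrix.linftyOpNormedAlgebra

theorem stmt_5_general (E : Type) [Fintype E] [DecidableEq E] (Q : Matrix E E ℝ) (α : ℝ) (μ : E → ℝ)
    (hα : 0 < α)
    (hexp : ∀ t : ℝ, 0 ≤ t → ∑ j, (μ ᵥ* NormedSpace.exp (t • Q)) j = Real.exp (-α * t))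
    (ν : E → ℝ) (hν : ν = (-1 / α) • (μ ᵥ* Q)) :
    ∀ t : ℝ, 0 ≤ t → ∑ j, (ν ᵥ* NormedSpace.exp (t • Q)) j = Real.exp (-α * t) := by
  intro t ht
  have hderiv : ∑ j, (μ ᵥ* (Q * exp (t • Q))) j = -α * Real.exp (-α * t) :=
    (sumVecMulCLM_apply μ _).symm.trans <|
      (sumVecMulCLM μ).apply_mul_exp_smul_of_apply_exp_smul Q (-α)
        (fun s hs => (sumVecMulCLM_apply μ _).trans (hexp s hs)) ht
  calc ∑ j, (ν ᵥ* exp (t • Q)) j = (-1 / α) * ∑ j, (μ ᵥ* (Q * exp (t • Q))) j := by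
        simp [hν, smul_vecMul, vecMul_vecMul, Finset.mul_sum]
    _ = Real.exp (-α * t) := by
        rw [hderiv]
        field_simp

theorem stmt_5 (E : Type) [Fintype E] [DecidableEq E] (Q : Matrix E E ℝ) (α : ℝ) (μ : E → ℝ)
    (hα : 0 < α)
    (hμ : ∀ i, 0 ≤ μ i) (hμ1 : ∑ i, μ i = 1)
    (hexp : ∀ t : ℝ, 0 ≤ t → ∑ j, (μ ᵥ* NormedSpace.exp (t • Q)) j = Real.exp (-α * t))
    (ν : E → ℝ) (hν : ν = (-1 / α) • (μ ᵥ* Q))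
    (hνpos : ∀ j, 0 ≤ ν j) (hν1 : ∑ j, ν j = 1) :
    ∀ t : ℝ, 0 ≤ t → ∑ j, (ν ᵥ* NormedSpace.exp (t • Q)) j = Real.exp (-α * t) :=
  stmt_5_general E Q α μ hα hexp ν hν
end

section
/- Let S be a finite set, Q a real S×S matrix, {E_1,…,E_n} a partition of S, V the associated S×{1,…,n} 0-1 inclusion matrix, and Q̄ an n×n matrix with Q·V = V·Q̄. Let μ be a probability vector on S and let μ̄ be the induced vector on {1,…,n}, μ̄_k = ∑_{i∈E_k} μ_i (equivalently μ̄ = μ·V). If μ̄·Q̄ = -α·μ̄ for some α > 0, then ∑_{k} (μ·exp(tQ)·V)_k = e^{-αt} for all t ≥ 0, and moreover μ·exp(tQ)·V = e^{-αt}·μ̄ for all t ≥ 0. -/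
open Matrix

/-! The lumping relation `Q V = V Q̄` passes to all powers and hence to the exponential series:
`exp (t Q) V = V exp (t Q̄)`. Therefore `μ exp (t Q) V = μ̄ exp (t Q̄)`, and since `μ̄` is a left
eigenvector of `Q̄` with eigenvalue `-α` it is one of `exp (t Q̄)` with eigenvalue `e^{-α t}`.
The total mass follows because every row of `V` sums to one. -/

section Exponential

variable {𝕂 𝔸 𝔹 E : Type*} [RCLike 𝕂]
  [NormedRing 𝔸] [NormedAlgebra 𝕂 𝔸] [CompleteSpace 𝔸]
  [NormedRing 𝔹] [NormedAlgebra 𝕂 𝔹] [CompleteSpace 𝔹]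
  [AddCommMonoid E] [Module 𝕂 E] [TopologicalSpace E] [T2Space E]

theorem ContinuousLinearMap.map_exp_eq_of_map_pow_eq (F : 𝔸 →L[𝕂] E) (G : 𝔹 →L[𝕂] E)
    {a : 𝔸} {b : 𝔹} (h : ∀ n : ℕ, F (a ^ n) = G (b ^ n)) :
    F (NormedSpace.exp a) = G (NormedSpace.exp b) := by
  have hF := (NormedSpace.exp_series_hasSum_exp' (𝕂 := 𝕂) a).mapL F
  have hG := (NormedSpace.exp_series_hasSum_exp' (𝕂 := 𝕂) b).mapL G
  simp only [map_smul, h] at hF hG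
  exact hF.unique hG

end Exponential

namespace Matrix

variable {m n : Type*} [Fintype m] [Fintype n]

theorem sum_vecMul_of_mulVec_one {α : Type*} [CommSemiring α] {M : Matrix m n α}
    (hM : M *ᵥ 1 = 1) (v : m → α) : ∑ j, (v ᵥ* M) j = ∑ i, v i := by
  rw [← dotProduct_one, ← dotProduct_mulVec, hM, dotProduct_one]

variable [DecidableEq m] [DecidableEq n]

theorem pow_mul_eq_mul_pow_of_mul_eq {α : Type*} [Semiring α] {A : Matrix m m α}
    {B : Matrix n n α} {V : Matrix m n α} (h : A * V = V * B) (k : ℕ) :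
    A ^ k * V = V * B ^ k := by
  induction k with
  | zero => simp
  | succ k ih => rw [pow_succ', Matrix.mul_assoc, ih, ← Matrix.mul_assoc, h, Matrix.mul_assoc,
      ← pow_succ']

theorem vecMul_pow_of_vecMul_eq_smul {α : Type*} [CommSemiring α] {A : Matrix m m α}
    {v : m → α} {a : α} (h : v ᵥ* A = a • v) (k : ℕ) : v ᵥ* A ^ k = a ^ k • v := by
  induction k with
  | zero => simp
  | succ k ih => rw [pow_succ, ← vecMul_vecMul, ih, smul_vecMul, h, smul_smul, pow_succ]

variable {𝕂 : Type*} [RCLike 𝕂]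

open scoped Norms.Operator in
theorem exp_mul_eq_mul_exp_of_mul_eq {A : Matrix m m 𝕂} {B : Matrix n n 𝕂} {V : Matrix m n 𝕂}
    (h : A * V = V * B) : NormedSpace.exp A * V = V * NormedSpace.exp B :=
  ContinuousLinearMap.map_exp_eq_of_map_pow_eq
    (LinearMap.toContinuousLinearMap (mulRightLinearMap m 𝕂 V))
    (LinearMap.toContinuousLinearMap (mulLeftLinearMap n 𝕂 V))
    (pow_mul_eq_mul_pow_of_mul_eq h)

open scoped Norms.Operator in
theorem vecMul_exp_of_vecMul_eq_smul {A : Matrix m m 𝕂} {v : m → 𝕂} {a : 𝕂}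
    (h : v ᵥ* A = a • v) : v ᵥ* NormedSpace.exp A = NormedSpace.exp a • v :=
  ContinuousLinearMap.map_exp_eq_of_map_pow_eq
    (LinearMap.toContinuousLinearMap (vecMulBilin 𝕂 𝕂 v))
    (ContinuousLinearMap.toSpanSingleton 𝕂 v)
    (vecMul_pow_of_vecMul_eq_smul h)

end Matrix

theorem stmt_10_general (S K : Type) [Fintype S] [DecidableEq S] [Fintype K] [DecidableEq K]
    (Q : Matrix S S ℝ) (c : S → K)
    (V : Matrix S K ℝ) (hV : ∀ i k, V i k = if c i = k then 1 else 0)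
    (Qbar : Matrix K K ℝ) (hlump : Q * V = V * Qbar)
    (μ : S → ℝ) (hμ1 : ∑ i, μ i = 1)
    (μbar : K → ℝ) (hμbar : μbar = μ ᵥ* V)
    (α : ℝ)
    (heig : μbar ᵥ* Qbar = -α • μbar) :
    ∀ t : ℝ, 0 ≤ t →
      (∑ k, ((μ ᵥ* NormedSpace.exp (t • Q)) ᵥ* V) k = Real.exp (-α * t)) ∧
      (μ ᵥ* NormedSpace.exp (t • Q)) ᵥ* V = Real.exp (-α * t) • μbar := by
  intro t _
  have hlump_t : (t • Q) * V = V * (t • Qbar) := by rw [Matrix.smul_mul, hlump, Matrix.mul_smul]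
  have heig_t : μbar ᵥ* (t • Qbar) = (-α * t) • μbar := by
    rw [vecMul_smul, heig, smul_smul, mul_comm]
  have hrows : V *ᵥ 1 = 1 := by
    ext i
    simp [mulVec, dotProduct, hV]
  have hmain : (μ ᵥ* NormedSpace.exp (t • Q)) ᵥ* V = Real.exp (-α * t) • μbar := by
    rw [vecMul_vecMul, exp_mul_eq_mul_exp_of_mul_eq hlump_t, ← vecMul_vecMul, ← hμbar,
      vecMul_exp_of_vecMul_eq_smul heig_t, Real.exp_eq_exp_ℝ]
  refine ⟨?_, hmain⟩
  rw [hmain]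
  simp only [Pi.smul_apply, smul_eq_mul, ← Finset.mul_sum, hμbar,
    sum_vecMul_of_mulVec_one hrows, hμ1, mul_one]

theorem stmt_10 (S K : Type) [Fintype S] [DecidableEq S] [Fintype K] [DecidableEq K]
    (Q : Matrix S S ℝ) (c : S → K)
    (V : Matrix S K ℝ) (hV : ∀ i k, V i k = if c i = k then 1 else 0)
    (Qbar : Matrix K K ℝ) (hlump : Q * V = V * Qbar)
    (μ : S → ℝ) (hμ : ∀ i, 0 ≤ μ i) (hμ1 : ∑ i, μ i = 1)
    (μbar : K → ℝ) (hμbar : μbar = μ ᵥ* V)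
    (α : ℝ) (hα : 0 < α)
    (heig : μbar ᵥ* Qbar = -α • μbar) :
    ∀ t : ℝ, 0 ≤ t →
      (∑ k, ((μ ᵥ* NormedSpace.exp (t • Q)) ᵥ* V) k = Real.exp (-α * t)) ∧
      (μ ᵥ* NormedSpace.exp (t • Q)) ᵥ* V = Real.exp (-α * t) • μbar :=
  stmt_10_general S K Q c V hV Qbar hlump μ hμ1 μbar hμbar α heig
end

section
/- Let q₂₁, q₃₁, q₂₃, q₃₂ be positive reals with q₂₁ ≠ q₃₁, and consider the 2×2 matrix Q̄ = [[-q₂₃ - q₂₁, q₂₃], [q₃₂, -q₃₂ - q₃₁]]. Define μ₂ = (q₂₁ - q₃₁ + q₂₃ + q₃₂ - √((q₂₁ - q₃₁ + q₂₃ - q₃₂)² + 4 q₂₃ q₃₂)) / (2(q₂₁ - q₃₁)), μ₃ = 1 - μ₂, and α = μ₂ q₂₁ + μ₃ q₃₁. Then the row vector μ = (μ₂, μ₃) satisfies μ·Q̄ = -α·μ. -/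
open Matrix

theorem stmt_11 (q21 q31 q23 q32 : ℝ)
    (h21 : 0 < q21) (h31 : 0 < q31) (h23 : 0 < q23) (h32 : 0 < q32)
    (hne : q21 ≠ q31)
    (Qbar : Matrix (Fin 2) (Fin 2) ℝ)
    (hQbar : Qbar = !![-q23 - q21, q23; q32, -q32 - q31])
    (μ2 μ3 α : ℝ)
    (hμ2 : μ2 = (q21 - q31 + q23 + q32 -
        Real.sqrt ((q21 - q31 + q23 - q32) ^ 2 + 4 * q23 * q32)) / (2 * (q21 - q31)))
    (hμ3 : μ3 = 1 - μ2)
    (hαdef : α = μ2 * q21 + μ3 * q31) :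
    ![μ2, μ3] ᵥ* Qbar = -α • ![μ2, μ3] := by
  have hd : q21 - q31 ≠ 0 := sub_ne_zero.mpr hne
  set s := Real.sqrt ((q21 - q31 + q23 - q32) ^ 2 + 4 * q23 * q32) with hsdef
  have hs : s ^ 2 = (q21 - q31 + q23 - q32) ^ 2 + 4 * q23 * q32 := by
    rw [hsdef]
    exact Real.sq_sqrt (by positivity)
  -- key quadratic identity for μ2
  have hquad : (q21 - q31) * μ2 ^ 2 - (q21 - q31 + q23 + q32) * μ2 + q32 = 0 := by
    rw [hμ2]
    field_simp
    nlinarith [hs]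
  subst hQbar hμ3 hαdef
  funext i
  fin_cases i <;>
    simp [vecMul, dotProduct, Fin.sum_univ_succ] <;> nlinarith [hquad]
end

section
/- Let 0 < λ < ν, and for t ≥ 0 define q_t = (ν e^{(ν-λ)t} - ν)/(ν e^{(ν-λ)t} - λ). For s ∈ [0,1) define G(s) = 1 - ((ν - λ s)/(ν (1 - s)))^{-α/(ν-λ)}, where α > 0. Then for every t ≥ 0, G(q_t) = 1 - e^{-αt}. Moreover q is strictly increasing on [0,∞), q_0 = 0, and lim_{t→∞} q_t = 1. -/
noncomputable def qfun (lam nu t : ℝ) : ℝ :=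
  (nu * Real.exp ((nu - lam) * t) - nu) / (nu * Real.exp ((nu - lam) * t) - lam)

noncomputable def Gfun (lam nu α s : ℝ) : ℝ :=
  1 - ((nu - lam * s) / (nu * (1 - s))) ^ (-α / (nu - lam))

/-!
Write `E = exp ((ν - λ) t)`. Then `1 - q_t = (ν - λ) / (ν E - λ)` and
`ν - λ q_t = ν E (ν - λ) / (ν E - λ)`, so the base of the power in `G (q_t)` is exactly `E`,
and `E ^ (-α / (ν - λ)) = exp (-α t)`. The first formula also shows that `q` increases
strictly from `0` to `1`.
-/

section

open Real Filter Topology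

variable {lam nu t : ℝ}

lemma qfun_denom_pos (hlamnu : lam < nu) (hnu : 0 ≤ nu) (ht : 0 ≤ t) :
    0 < nu * exp ((nu - lam) * t) - lam := by
  have hE : 1 ≤ exp ((nu - lam) * t) := one_le_exp (mul_nonneg (sub_nonneg.2 hlamnu.le) ht)
  nlinarith

lemma one_sub_qfun (hd : nu * exp ((nu - lam) * t) - lam ≠ 0) :
    1 - qfun lam nu t = (nu - lam) / (nu * exp ((nu - lam) * t) - lam) := by
  rw [qfun]
  field_simp
  ring

lemma qfun_ratio_eq_exp (hnu : nu ≠ 0) (hlamnu : nu - lam ≠ 0)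
    (hd : nu * exp ((nu - lam) * t) - lam ≠ 0) :
    (nu - lam * qfun lam nu t) / (nu * (1 - qfun lam nu t)) = exp ((nu - lam) * t) := by
  have hnum : nu - lam * qfun lam nu t =
      nu * exp ((nu - lam) * t) * (nu - lam) / (nu * exp ((nu - lam) * t) - lam) := by
    rw [qfun]
    field_simp
    ring
  rw [one_sub_qfun hd, hnum]
  field_simp

lemma Gfun_qfun (α : ℝ) (hnu : nu ≠ 0) (hlamnu : nu - lam ≠ 0)
    (hd : nu * exp ((nu - lam) * t) - lam ≠ 0) :
    Gfun lam nu α (qfun lam nu t) = 1 - exp (-α * t) := by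
  rw [Gfun, qfun_ratio_eq_exp hnu hlamnu hd, ← exp_mul]
  congr 2
  field_simp

lemma strictMonoOn_qfun (hlamnu : lam < nu) (hnu : 0 < nu) :
    StrictMonoOn (qfun lam nu) (Set.Ici 0) := by
  intro s hs t ht hst
  have hs' := qfun_denom_pos hlamnu hnu.le hs
  have hden : nu * exp ((nu - lam) * s) - lam < nu * exp ((nu - lam) * t) - lam :=
    sub_lt_sub_right (mul_lt_mul_of_pos_left
      (exp_lt_exp.2 (mul_lt_mul_of_pos_left hst (sub_pos.2 hlamnu))) hnu) lam
  have := div_lt_div_of_pos_left (sub_pos.2 hlamnu) hs' hden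
  rw [← one_sub_qfun hs'.ne', ← one_sub_qfun (hs'.trans hden).ne'] at this
  linarith

lemma qfun_zero : qfun lam nu 0 = 0 := by
  simp [qfun]

lemma tendsto_qfun_atTop (hlamnu : lam < nu) (hnu : 0 < nu) :
    Tendsto (qfun lam nu) atTop (𝓝 1) := by
  have hden : Tendsto (fun t ↦ nu * exp ((nu - lam) * t) - lam) atTop atTop :=
    tendsto_atTop_add_const_right _ _ <| (tendsto_exp_atTop.comp
      (tendsto_id.const_mul_atTop (sub_pos.2 hlamnu))).const_mul_atTop hnu
  have hone_sub : Tendsto (fun t ↦ 1 - qfun lam nu t) atTop (𝓝 0) := by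
    refine ((tendsto_const_nhds (x := nu - lam)).div_atTop hden).congr' ?_
    filter_upwards [eventually_ge_atTop 0] with t ht
    exact (one_sub_qfun (qfun_denom_pos hlamnu hnu.le ht).ne').symm
  simpa using (tendsto_const_nhds (x := (1 : ℝ))).sub hone_sub

end

theorem stmt_13_general (lam nu α : ℝ) (hlam : 0 < lam) (hlamnu : lam < nu) :
    (∀ t : ℝ, 0 ≤ t → Gfun lam nu α (qfun lam nu t) = 1 - Real.exp (-α * t)) ∧
    StrictMonoOn (qfun lam nu) (Set.Ici 0) ∧
    qfun lam nu 0 = 0 ∧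
    Filter.Tendsto (qfun lam nu) Filter.atTop (nhds 1) := by
  have hnu : 0 < nu := hlam.trans hlamnu
  refine ⟨fun t ht ↦ ?_, strictMonoOn_qfun hlamnu hnu, qfun_zero,
    tendsto_qfun_atTop hlamnu hnu⟩
  exact Gfun_qfun α hnu.ne' (sub_pos.2 hlamnu).ne' (qfun_denom_pos hlamnu hnu.le ht).ne'

theorem stmt_13 (lam nu α : ℝ) (hlam : 0 < lam) (hlamnu : lam < nu) (hα : 0 < α) :
    (∀ t : ℝ, 0 ≤ t → Gfun lam nu α (qfun lam nu t) = 1 - Real.exp (-α * t)) ∧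
    StrictMonoOn (qfun lam nu) (Set.Ici 0) ∧
    qfun lam nu 0 = 0 ∧
    Filter.Tendsto (qfun lam nu) Filter.atTop (nhds 1) :=
  stmt_13_general lam nu α hlam hlamnu
end
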